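/- Let T be an abelian regular subgroup of Aff(V) with δ as above. Define x·y := x·δ(y). Then (V, +, ·) is a commutative, associative F-algebra (a not-necessarily-unital commutative ring with compatible F-bilinear multiplication). -/
import Mathlib


theorem stmt {F V : Type*} [Field F] [AddCommGroup V] [Module F V]
    (T : Subgroup (V ≃ᵃ[F] V))
    (hcomm : ∀ g ∈ T, ∀ h ∈ T, g * h = h * g)
    (hreg : ∀ v : V, ∃! g : V ≃ᵃ[F] V, g ∈ T ∧ g 0 = v)
    (τ : V → (V ≃ᵃ[F] V)) (hτT : ∀ x, τ x ∈ T) (hτ0 : ∀ x, τ x 0 = x)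
    (δ : V → Module.End F V)
    (hδ : ∀ x z, τ x z = z + δ x z + x) :
    (∀ x y : V, δ y x = δ x y) ∧
    (∀ x y z : V, δ z (δ y x) = δ (δ z y) x) ∧
    (∀ x y z : V, δ z (x + y) = δ z x + δ z y) ∧
    (∀ (c : F) (x y : V), δ y (c • x) = c • δ y x) ∧
    (∀ x y z : V, δ (y + z) x = δ y x + δ z x) ∧
    (∀ (c : F) (x y : V), δ (c • y) x = c • δ y x) := by
  -- symmetry
  have hsymm : ∀ x y : V, δ y x = δ x y := by
    intro x y
    have hc := hcomm (τ x) (hτT x) (τ y) (hτT y)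
    have h0 := congrArg (fun g : V ≃ᵃ[F] V => g 0) hc
    simp only [AffineEquiv.coe_mul, Function.comp_apply, hτ0] at h0
    rw [hδ x y, hδ y x] at h0
    have : δ y x - δ x y = 0 := by
      have h1 : (y + δ x y + x) - (x + δ y x + y) = 0 := sub_eq_zero.mpr h0
      calc δ y x - δ x y = -((y + δ x y + x) - (x + δ y x + y)) := by abel
        _ = 0 := by rw [h1]; simp
    exact sub_eq_zero.mp this
  -- τ multiplies according to x + y + δ x y
  have hmul : ∀ x y : V, τ x * τ y = τ (x + y + δ x y) := by
    intro x y
    obtain ⟨g, hg, hu⟩ := hreg (x + y + δ x y)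
    have h1 : τ x * τ y = g := by
      apply hu
      constructor
      · exact T.mul_mem (hτT x) (hτT y)
      · show (τ x * τ y) 0 = _
        simp only [AffineEquiv.coe_mul, Function.comp_apply, hτ0]
        rw [hδ x y]; abel
    have h2 : τ (x + y + δ x y) = g := hu _ ⟨hτT _, hτ0 _⟩
    rw [h1, h2]
  -- key pointwise identity
  have hkey : ∀ x y z : V, δ (x + y + δ x y) z = δ x z + δ y z + δ x (δ y z) := by
    intro x y z
    have h := congrArg (fun g : V ≃ᵃ[F] V => g z) (hmul x y)
    simp only [AffineEquiv.coe_mul, Function.comp_apply] at h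
    rw [hδ y z, hδ x, hδ (x + y + δ x y) z] at h
    simp only [map_add] at h
    have h1 : (z + δ y z + y + (δ x z + δ x (δ y z) + δ x y) + x)
        - (z + δ (x + y + δ x y) z + (x + y + δ x y)) = 0 := sub_eq_zero.mpr h
    have h2 : δ (x + y + δ x y) z - (δ x z + δ y z + δ x (δ y z))
        = -((z + δ y z + y + (δ x z + δ x (δ y z) + δ x y) + x)
            - (z + δ (x + y + δ x y) z + (x + y + δ x y))) := by abel
    rw [h1] at h2
    simp at h2
    exact sub_eq_zero.mp h2
  -- derived associativity-type identity: δ z (δ x y) = δ x (δ y z)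
  have hassoc : ∀ x y z : V, δ z (δ x y) = δ x (δ y z) := by
    intro x y z
    have h := hkey x y z
    rw [hsymm z (x + y + δ x y)] at h
    simp only [map_add] at h
    rw [hsymm x z, hsymm y z] at h
    exact add_left_cancel h
  refine ⟨hsymm, ?_, ?_, ?_, ?_, ?_⟩
  · intro x y z
    calc δ z (δ y x) = δ y (δ x z) := hassoc y x z
      _ = δ x (δ z y) := hassoc x z y
      _ = δ (δ z y) x := (hsymm _ _)
  · intro x y z; exact map_add _ _ _
  · intro c x y; exact map_smul _ _ _
  · intro x y z
    rw [hsymm x (y + z), map_add, hsymm x y, hsymm x z]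
  · intro c x y
    rw [hsymm x (c • y), map_smul, hsymm x y]
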